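/- arXiv:1802.03681 — 7 statements merged into one kernel-verified Lean document; each statement's English description precedes it below -/
import Mathlib

section
/- Let G : ℝ → ℝ be twice continuously differentiable and satisfy the ODE (1/2)·G''(x) + (x/2)·G'(x) + G(x) − (1/2)·G(x)² = 0 for all x ∈ ℝ. Define v : (0,∞) × ℝ → ℝ by v(t,x) = t⁻¹·G(t^{-1/2}·x). Then v is C^{1,2} on (0,∞) × ℝ (once continuously differentiable in t and twice continuously differentiable in x) and satisfies the PDE ∂v/∂t(t,x) = (1/2)·∂²v/∂x²(t,x) − (1/2)·v(t,x)² for all (t,x) ∈ (0,∞) × ℝ. -/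
/-- The rescaled function `v(t,x) = t⁻¹ · G(t^{-1/2}·x)`. -/
noncomputable def vOf (G : ℝ → ℝ) (t x : ℝ) : ℝ := t⁻¹ * G ((Real.sqrt t)⁻¹ * x)

/-- `v` is C^{1,2} on `(0,∞) × ℝ`: once (continuously) differentiable in `t` and twice
(continuously) differentiable in `x`, with the partial derivatives jointly continuous there. -/
def IsC12 (v : ℝ → ℝ → ℝ) : Prop :=
  (∀ t, 0 < t → ∀ x : ℝ, DifferentiableAt ℝ (fun s => v s x) t) ∧
  (∀ t, 0 < t → ∀ x : ℝ, DifferentiableAt ℝ (fun y => v t y) x) ∧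
  (∀ t, 0 < t → ∀ x : ℝ, DifferentiableAt ℝ (deriv (fun y => v t y)) x) ∧
  ContinuousOn (fun p : ℝ × ℝ => deriv (fun s => v s p.2) p.1) (Set.Ioi 0 ×ˢ Set.univ) ∧
  ContinuousOn (fun p : ℝ × ℝ => deriv (fun y => v p.1 y) p.2) (Set.Ioi 0 ×ˢ Set.univ) ∧
  ContinuousOn (fun p : ℝ × ℝ => deriv (deriv (fun y => v p.1 y)) p.2) (Set.Ioi 0 ×ˢ Set.univ)

/-! Every partial derivative of `v = vOf G` is again of the form `c(t) · vOf H`, with `H` built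
from `G`, `G'`, `G''`: `∂ₓv = t^{-1/2} · vOf G'`, `∂ₓ²v = t⁻¹ · vOf G''` and
`∂ₜv = -t⁻¹ · vOf (y ↦ G y + (y/2) G' y)`. Continuity of the partial derivatives follows, and
`∂ₜv - ½ ∂ₓ²v + ½ v²` is `-t⁻²` times the left side of the ODE at `y = t^{-1/2}·x`. -/

open Set Real

variable {G : ℝ → ℝ} {t x : ℝ}

theorem hasDerivAt_vOf_snd (hG : DifferentiableAt ℝ G ((√t)⁻¹ * x)) :
    HasDerivAt (vOf G t) ((√t)⁻¹ * vOf (deriv G) t x) x := by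
  refine ((hG.hasDerivAt.comp x ((hasDerivAt_id x).const_mul (√t)⁻¹)).const_mul t⁻¹).congr_deriv ?_
  simp only [vOf, mul_one]
  ring

theorem deriv_vOf_snd (hG : Differentiable ℝ G) (t : ℝ) :
    deriv (vOf G t) = fun x => (√t)⁻¹ * vOf (deriv G) t x :=
  funext fun _ => (hasDerivAt_vOf_snd (hG _)).deriv

theorem hasDerivAt_deriv_vOf_snd (hG : Differentiable ℝ G)
    (hG' : DifferentiableAt ℝ (deriv G) ((√t)⁻¹ * x)) :
    HasDerivAt (deriv (vOf G t)) ((√t)⁻¹ * ((√t)⁻¹ * vOf (deriv (deriv G)) t x)) x := by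
  rw [deriv_vOf_snd hG]
  exact (hasDerivAt_vOf_snd hG').const_mul _

theorem hasDerivAt_vOf_fst (ht : 0 < t) (hG : DifferentiableAt ℝ G ((√t)⁻¹ * x)) :
    HasDerivAt (fun s => vOf G s x) (-t⁻¹ * vOf (fun y => G y + y / 2 * deriv G y) t x) t := by
  have hscale := ((hasDerivAt_sqrt ht.ne').inv (sqrt_pos.2 ht).ne').mul_const x
  refine ((hasDerivAt_inv ht.ne').mul (hG.hasDerivAt.comp t hscale)).congr_deriv ?_
  simp only [vOf, Function.comp_apply, Pi.inv_apply]
  obtain ⟨s, hs, rfl⟩ : ∃ s, 0 < s ∧ t = s ^ 2 := ⟨√t, sqrt_pos.2 ht, (sq_sqrt ht.le).symm⟩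
  rw [sqrt_sq hs.le]
  field_simp
  ring

theorem continuousOn_vOf (hG : Continuous G) :
    ContinuousOn (fun p : ℝ × ℝ => vOf G p.1 p.2) (Ioi 0 ×ˢ univ) := by
  rintro p ⟨hp : 0 < p.1, -⟩
  have : √p.1 ≠ 0 := (sqrt_pos.2 hp).ne'
  apply ContinuousAt.continuousWithinAt
  unfold vOf
  fun_prop (disch := positivity)

theorem continuousOn_inv_sqrt_fst : ContinuousOn (fun p : ℝ × ℝ => (√p.1)⁻¹) (Ioi 0 ×ˢ univ) :=
  (continuous_sqrt.comp continuous_fst).continuousOn.inv₀ fun _ hp => (sqrt_pos.2 hp.1).ne'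

theorem isC12_vOf (hG : ContDiff ℝ 2 G) : IsC12 (vOf G) := by
  have hG₁ : Differentiable ℝ G := hG.differentiable (by norm_num)
  have hG₂ : Differentiable ℝ (deriv G) := hG.differentiable_deriv_two
  have hG₃ : Continuous (deriv (deriv G)) := (hG.deriv' (n := 1)).continuous_deriv_one
  have hH : Continuous fun y => G y + y / 2 * deriv G y := by
    have := hG₁.continuous; have := hG₂.continuous; fun_prop
  refine ⟨fun t ht x => (hasDerivAt_vOf_fst ht (hG₁ _)).differentiableAt,
    fun t _ x => (hasDerivAt_vOf_snd (hG₁ _)).differentiableAt,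
    fun t _ x => (hasDerivAt_deriv_vOf_snd hG₁ (hG₂ _)).differentiableAt, ?_, ?_, ?_⟩
  · refine ((continuousOn_fst.inv₀ fun p hp => hp.1.ne').neg.mul (continuousOn_vOf hH)).congr ?_
    exact fun p hp => (hasDerivAt_vOf_fst hp.1 (hG₁ _)).deriv
  · refine (continuousOn_inv_sqrt_fst.mul (continuousOn_vOf hG₂.continuous)).congr ?_
    exact fun p _ => (hasDerivAt_vOf_snd (hG₁ _)).deriv
  · refine (continuousOn_inv_sqrt_fst.mul
      (continuousOn_inv_sqrt_fst.mul (continuousOn_vOf hG₃))).congr ?_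
    exact fun p _ => (hasDerivAt_deriv_vOf_snd hG₁ (hG₂ _)).deriv

theorem deriv_vOf_fst_eq_of_ode (hG : Differentiable ℝ G) (hG' : Differentiable ℝ (deriv G))
    (hODE : ∀ x : ℝ,
      (1/2) * deriv (deriv G) x + (x/2) * deriv G x + G x - (1/2) * (G x)^2 = 0)
    (ht : 0 < t) (x : ℝ) :
    deriv (fun s => vOf G s x) t
      = (1/2) * deriv (deriv (fun y => vOf G t y)) x - (1/2) * (vOf G t x)^2 := by
  rw [(hasDerivAt_vOf_fst ht (hG _)).deriv, (hasDerivAt_deriv_vOf_snd hG (hG' _)).deriv]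
  have hinv : (√t)⁻¹ * (√t)⁻¹ = t⁻¹ := by rw [← mul_inv, mul_self_sqrt ht.le]
  simp only [vOf]
  linear_combination (-(t⁻¹ * t⁻¹)) * hODE ((√t)⁻¹ * x)
    - (1/2 * t⁻¹ * deriv (deriv G) ((√t)⁻¹ * x)) * hinv

theorem stmt0 (G : ℝ → ℝ) (hG : ContDiff ℝ 2 G)
    (hODE : ∀ x : ℝ,
      (1/2) * deriv (deriv G) x + (x/2) * deriv G x + G x - (1/2) * (G x)^2 = 0) :
    IsC12 (vOf G) ∧
    ∀ t, 0 < t → ∀ x : ℝ,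
      deriv (fun s => vOf G s x) t
        = (1/2) * deriv (deriv (fun y => vOf G t y)) x - (1/2) * (vOf G t x)^2 :=
  ⟨isC12_vOf hG, fun _ ht x =>
    deriv_vOf_fst_eq_of_ode (hG.differentiable (by norm_num)) hG.differentiable_deriv_two hODE ht x⟩
end

section
/- There is at most one positive C² solution of the ODE with the stated boundary conditions: if G, H : ℝ → ℝ are twice continuously differentiable, G(x) > 0 and H(x) > 0 for all x, both satisfy the ODE (1/2)·G''(x) + (x/2)·G'(x) + G(x) − (1/2)·G(x)² = 0 for all x ∈ ℝ, and both satisfy lim_{x→∞} x²·G(x) = 0 and lim_{x→−∞} G(x) = 2 (and the same two limits for H), then G = H. -/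
/-!
Write `L y = y'' + x y' + 2 y`, so that the equation reads `L G = G²`. By Abel's identity for
`L`, `P = exp (x²/2) (H' G - H G')` has derivative `exp (x²/2) (G · L H - H · L G)`, which for
two solutions is `exp (x²/2) G H (H - G)`.

Decay: if `G > 0`, `L G ≥ 0` and `x² G → 0`, then `exp (x²/4) G` is nonincreasing on
`[10, ∞)`. Otherwise, at a point where its derivative is positive, the Wronskian of `G` with a
suitable positive supersolution `k ≥ x⁻²` of `L` is nonnegative; it then stays nonnegative, so
`G / k` is nondecreasing and `x² G` is bounded below by a positive constant.

Uniqueness: suppose `H < G` somewhere and put `φ = H / G`, so `φ' = P / (exp (x²/2) G²)`.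
Where `φ < 1` the function `P` decreases, so `φ` has no local minimum below `1`; as `φ → 1` at
`-∞`, `φ` decreases strictly from that point on. Then `P ≤ -p < 0` eventually, and the Gaussian
bound on `G` gives `φ' ≤ -p / C²`, contradicting `φ > 0`.
-/

open Filter

open Real Set Topology

lemma hasDerivAt_exp_sq_div (c x : ℝ) :
    HasDerivAt (fun y => exp (y ^ 2 / c)) (exp (x ^ 2 / c) * (2 * x / c)) x := by
  simpa using ((hasDerivAt_pow 2 x).div_const c).exp

lemma hasDerivAt_exp_neg_sq_div_four (x : ℝ) :
    HasDerivAt (fun y => exp (-(y ^ 2 / 4))) (-(x / 2) * exp (-(x ^ 2 / 4))) x := by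
  refine ((hasDerivAt_pow 2 x).div_const 4).neg.exp.congr_deriv ?_
  simp only [Pi.neg_apply, Nat.cast_ofNat, Nat.add_one_sub_one, pow_one, mul_neg, neg_mul, neg_inj]
  ring

lemma hasDerivAt_exp_mul_wronskian {f f₁ g g₁ : ℝ → ℝ} {f₂ g₂ x : ℝ}
    (hf : HasDerivAt f (f₁ x) x) (hf₁ : HasDerivAt f₁ f₂ x)
    (hg : HasDerivAt g (g₁ x) x) (hg₁ : HasDerivAt g₁ g₂ x) :
    HasDerivAt (fun y => exp (y ^ 2 / 2) * (f₁ y * g y - f y * g₁ y))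
      (exp (x ^ 2 / 2) *
        ((f₂ + x * f₁ x + 2 * f x) * g x - f x * (g₂ + x * g₁ x + 2 * g x))) x := by
  refine ((hasDerivAt_exp_sq_div 2 x).fun_mul
    ((hf₁.fun_mul hg).fun_sub (hf.fun_mul hg₁))).congr_deriv ?_
  ring

lemma monotoneOn_div_of_wronskian_nonneg {f f₁ g g₁ : ℝ → ℝ} {s : Set ℝ}
    (hs : Convex ℝ s) (hf : ∀ x ∈ s, HasDerivAt f (f₁ x) x)
    (hg : ∀ x ∈ s, HasDerivAt g (g₁ x) x)
    (hg₀ : ∀ x ∈ s, g x ≠ 0) (hW : ∀ x ∈ s, 0 ≤ f₁ x * g x - f x * g₁ x) :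
    MonotoneOn (fun x => f x / g x) s := by
  have hd (x) (hx : x ∈ s) :
      HasDerivAt (fun x => f x / g x) ((f₁ x * g x - f x * g₁ x) / g x ^ 2) x :=
    (hf x hx).div (hg x hx) (hg₀ x hx)
  refine monotoneOn_of_hasDerivWithinAt_nonneg hs
    (fun x hx => (hd x hx).continuousAt.continuousWithinAt)
    (fun x hx => (hd x (interior_subset hx)).hasDerivWithinAt) fun x hx => ?_
  have := hW x (interior_subset hx)
  positivity

lemma strictMonoOn_of_hasDerivAt_div_of_strictAntiOn {φ P w : ℝ → ℝ} {a z : ℝ}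
    (hφ : ∀ x, HasDerivAt φ (P x / w x) x) (hw : ∀ x, 0 < w x) (hP : StrictAntiOn P (Icc a z))
    (hz : 0 ≤ P z) : StrictMonoOn φ (Icc a z) := by
  refine strictMonoOn_of_hasDerivWithinAt_pos (convex_Icc a z)
    (fun x _ => (hφ x).continuousAt.continuousWithinAt) (fun x _ => (hφ x).hasDerivWithinAt)
    fun x hx => ?_
  rw [interior_Icc] at hx
  have hPx : P z < P x := hP ⟨hx.1.le, hx.2.le⟩ ⟨hx.1.le.trans hx.2.le, le_rfl⟩ hx.2
  exact div_pos (hz.trans_lt hPx) (hw x)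

lemma not_isLocalMin_of_hasDerivAt_div_of_strictAntiOn {φ P w : ℝ → ℝ} {a z : ℝ}
    (ha : a < z) (hφ : ∀ x, HasDerivAt φ (P x / w x) x) (hw : ∀ x, 0 < w x)
    (hP : StrictAntiOn P (Icc a z)) : ¬ IsLocalMin φ z := by
  intro hmin
  have hPz : P z = 0 := by
    have := hmin.hasDerivAt_eq_zero (hφ z)
    rwa [div_eq_zero_iff, or_iff_left (hw z).ne'] at this
  have hmono := strictMonoOn_of_hasDerivAt_div_of_strictAntiOn hφ hw hP hPz.ge
  have hleft : ∀ᶠ t in 𝓝[<] z, φ t < φ z := mem_of_superset (Ico_mem_nhdsLT ha)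
    fun t ht => hmono ⟨ht.1, ht.2.le⟩ ⟨ha.le, le_rfl⟩ ht.2
  obtain ⟨t, hlt, hle⟩ := (hleft.and (hmin.filter_mono nhdsWithin_le_nhds)).exists
  exact hle.not_gt hlt

lemma lt_of_tendsto_atBot_of_not_isLocalMin {φ : ℝ → ℝ} {c a b : ℝ} (hφ : Continuous φ)
    (hbot : Tendsto φ atBot (𝓝 c)) (hmin : ∀ z, φ z < c → ¬ IsLocalMin φ z) (hab : a < b)
    (ha : φ a < c) : φ b < φ a := by
  by_contra! hba
  obtain ⟨A, hA⟩ := eventually_atBot.1 (hbot.eventually (lt_mem_nhds ha))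
  set A' := min A (a - 1)
  have hA'a : A' < a := (min_le_right _ _).trans_lt (by linarith)
  obtain ⟨y, hy, hymin⟩ := isCompact_Icc.exists_isMinOn (nonempty_Icc.2 (hA'a.trans hab).le)
    hφ.continuousOn
  have hya : φ y ≤ φ a := hymin ⟨hA'a.le, hab.le⟩
  obtain ⟨z, hz, hzmin⟩ : ∃ z ∈ Ioo A' b, IsMinOn φ (Icc A' b) z := by
    rcases hy.2.lt_or_eq with hyb | rfl
    · refine ⟨y, ⟨hy.1.lt_of_ne ?_, hyb⟩, hymin⟩
      rintro rfl
      exact (hA A' (min_le_left _ _)).not_ge hya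
    · exact ⟨a, ⟨hA'a, hab⟩, fun t ht => hba.trans (hymin ht)⟩
  exact hmin z ((hzmin ⟨hA'a.le, hab.le⟩).trans_lt ha)
    (hzmin.isLocalMin (Icc_mem_nhds hz.1 hz.2))

lemma exists_nonpos_of_hasDerivAt_le_neg {f f' : ℝ → ℝ} {M k : ℝ} (hk : 0 < k)
    (hf : ∀ x, HasDerivAt f (f' x) x) (hle : ∀ x ∈ Ici M, f' x ≤ -k) :
    ∃ x, f x ≤ 0 := by
  by_contra! hpos
  have hM : M ≤ M + f M / k := le_add_of_nonneg_right (div_pos (hpos M) hk).le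
  have := (convex_Ici M).image_sub_le_mul_sub_of_deriv_le
    (fun x _ => (hf x).continuousAt.continuousWithinAt)
    (fun x _ => (hf x).differentiableAt.differentiableWithinAt)
    (fun x hx => (hf x).deriv ▸ hle x (interior_subset hx)) M self_mem_Ici _ hM hM
  rw [add_sub_cancel_left, neg_mul, mul_div_cancel₀ _ hk.ne'] at this
  linarith [hpos (M + f M / k)]

/-- `(x² - 4)⁻¹` decays like the slow solution `x⁻²` of `L y = 0` and is a supersolution of
`L` for `x² ≥ 40`; the supersolution `K exp (-x²/4)` is added to make the Wronskian with `G`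
nonnegative at a prescribed point. -/
noncomputable def gaussBarrier (K x : ℝ) : ℝ := (x ^ 2 - 4)⁻¹ + K * exp (-(x ^ 2 / 4))

noncomputable def gaussBarrierDeriv (K x : ℝ) : ℝ :=
  -2 * x / (x ^ 2 - 4) ^ 2 - K * (x / 2) * exp (-(x ^ 2 / 4))

lemma gaussBarrier_pos {K x : ℝ} (hK : 0 ≤ K) (hx : 4 < x ^ 2) : 0 < gaussBarrier K x := by
  have : 0 < x ^ 2 - 4 := by linarith
  unfold gaussBarrier
  positivity

lemma one_le_sq_mul_gaussBarrier {K x : ℝ} (hK : 0 ≤ K) (hx : 4 < x ^ 2) :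
    1 ≤ x ^ 2 * gaussBarrier K x := by
  have h4 : 0 < x ^ 2 - 4 := by linarith
  have : 1 ≤ x ^ 2 * (x ^ 2 - 4)⁻¹ := by
    rw [← div_eq_mul_inv, one_le_div h4]; linarith
  unfold gaussBarrier
  nlinarith [mul_nonneg (mul_nonneg (sq_nonneg x) hK) (exp_pos (-(x ^ 2 / 4))).le]

lemma hasDerivAt_gaussBarrier (K : ℝ) {x : ℝ} (hx : x ^ 2 - 4 ≠ 0) :
    HasDerivAt (gaussBarrier K) (gaussBarrierDeriv K x) x := by
  have h := (((hasDerivAt_pow 2 x).sub_const 4).inv hx).add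
    ((hasDerivAt_exp_neg_sq_div_four x).const_mul K)
  refine h.congr_deriv ?_
  simp only [gaussBarrierDeriv]
  field_simp
  ring

lemma hasDerivAt_gaussBarrierDeriv (K : ℝ) {x : ℝ} (hx : x ^ 2 - 4 ≠ 0) :
    HasDerivAt (gaussBarrierDeriv K)
      ((6 * x ^ 2 + 8) / (x ^ 2 - 4) ^ 3 + K * (x ^ 2 / 4 - 1 / 2) * exp (-(x ^ 2 / 4))) x := by
  have h := (((hasDerivAt_id x).const_mul (-2)).fun_div
    (((hasDerivAt_pow 2 x).sub_const 4).fun_pow 2) (pow_ne_zero 2 hx)).fun_sub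
    ((((hasDerivAt_id x).div_const 2).const_mul K).fun_mul (hasDerivAt_exp_neg_sq_div_four x))
  refine h.congr_deriv ?_
  simp only [id]
  field_simp
  ring

lemma gaussBarrier_supersolution {K x : ℝ} (hK : 0 ≤ K) (hx : 40 ≤ x ^ 2) :
    (6 * x ^ 2 + 8) / (x ^ 2 - 4) ^ 3 + K * (x ^ 2 / 4 - 1 / 2) * exp (-(x ^ 2 / 4))
      + x * gaussBarrierDeriv K x + 2 * gaussBarrier K x ≤ 0 := by
  have hx4 : 0 < x ^ 2 - 4 := by linarith
  have h : (6 * x ^ 2 + 8) / (x ^ 2 - 4) ^ 3 + K * (x ^ 2 / 4 - 1 / 2) * exp (-(x ^ 2 / 4))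
      + x * gaussBarrierDeriv K x + 2 * gaussBarrier K x
      = (40 - 2 * x ^ 2) / (x ^ 2 - 4) ^ 3 + K * (3 / 2 - x ^ 2 / 4) * exp (-(x ^ 2 / 4)) := by
    simp only [gaussBarrierDeriv, gaussBarrier]
    field_simp
    ring
  rw [h]
  have h₁ : (40 - 2 * x ^ 2) / (x ^ 2 - 4) ^ 3 ≤ 0 :=
    div_nonpos_of_nonpos_of_nonneg (by linarith) (by positivity)
  have h₂ : K * (3 / 2 - x ^ 2 / 4) * exp (-(x ^ 2 / 4)) ≤ 0 :=
    mul_nonpos_of_nonpos_of_nonneg (mul_nonpos_of_nonneg_of_nonpos hK (by linarith))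
      (exp_pos _).le
  linarith

lemma div_gaussBarrier_mul_le {G : ℝ → ℝ} (hG : Differentiable ℝ G)
    (hG' : Differentiable ℝ (deriv G)) (hpos : ∀ x, 0 < G x)
    (hL : ∀ x, 0 ≤ deriv (deriv G) x + x * deriv G x + 2 * G x)
    {K a : ℝ} (hK : 0 ≤ K) (ha : 10 ≤ a)
    (hW : 0 ≤ deriv G a * gaussBarrier K a - G a * gaussBarrierDeriv K a)
    {x : ℝ} (hx : a ≤ x) : G a / gaussBarrier K a * gaussBarrier K x ≤ G x := by
  have hsq (y) (hy : y ∈ Ici a) : 40 ≤ y ^ 2 := by nlinarith [mem_Ici.1 hy]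
  have hk (y) (hy : y ∈ Ici a) : 0 < gaussBarrier K y :=
    gaussBarrier_pos hK (by linarith [hsq y hy])
  have hkd (y) (hy : y ∈ Ici a) := hasDerivAt_gaussBarrier K (x := y) (by linarith [hsq y hy])
  have hZ : MonotoneOn (fun y => exp (y ^ 2 / 2) *
      (deriv G y * gaussBarrier K y - G y * gaussBarrierDeriv K y)) (Ici a) := by
    have hd (y) (hy : y ∈ Ici a) := hasDerivAt_exp_mul_wronskian (hG y).hasDerivAt
      (hG' y).hasDerivAt (hkd y hy) (hasDerivAt_gaussBarrierDeriv K (by linarith [hsq y hy]))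
    refine monotoneOn_of_hasDerivWithinAt_nonneg (convex_Ici a)
      (fun y hy => (hd y hy).continuousAt.continuousWithinAt)
      (fun y hy => (hd y (interior_subset hy)).hasDerivWithinAt) fun y hy => ?_
    have hy := interior_subset hy
    have h₁ := mul_nonneg (hL y) (hk y hy).le
    have h₂ := mul_nonneg (hpos y).le
      (neg_nonneg.2 (gaussBarrier_supersolution hK (hsq y hy)))
    exact mul_nonneg (exp_pos _).le (by linarith)
  have hW' (y) (hy : y ∈ Ici a) :
      0 ≤ deriv G y * gaussBarrier K y - G y * gaussBarrierDeriv K y := by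
    have := (mul_nonneg (exp_pos _).le hW).trans (hZ self_mem_Ici hy hy)
    exact nonneg_of_mul_nonneg_right this (exp_pos _)
  have := monotoneOn_div_of_wronskian_nonneg (convex_Ici a) (fun y _ => (hG y).hasDerivAt)
    hkd (fun y hy => (hk y hy).ne') hW' self_mem_Ici hx hx
  rwa [le_div_iff₀ (hk x hx)] at this

lemma deriv_add_half_mul_nonpos {G : ℝ → ℝ} (hG : Differentiable ℝ G)
    (hG' : Differentiable ℝ (deriv G)) (hpos : ∀ x, 0 < G x)
    (hL : ∀ x, 0 ≤ deriv (deriv G) x + x * deriv G x + 2 * G x)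
    (htop : Tendsto (fun x => x ^ 2 * G x) atTop (𝓝 0)) {a : ℝ} (ha : 10 ≤ a) :
    deriv G a + a / 2 * G a ≤ 0 := by
  by_contra! h
  set A := deriv G a * gaussBarrier 0 a - G a * gaussBarrierDeriv 0 a
  set B := exp (-(a ^ 2 / 4)) * (deriv G a + a / 2 * G a)
  set K := |A| / B
  have hB : 0 < B := by positivity
  have hK : 0 ≤ K := by positivity
  have hW : 0 ≤ deriv G a * gaussBarrier K a - G a * gaussBarrierDeriv K a := by
    have : deriv G a * gaussBarrier K a - G a * gaussBarrierDeriv K a = A + K * B := by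
      simp only [A, B, gaussBarrier, gaussBarrierDeriv]
      ring
    rw [this, div_mul_cancel₀ _ hB.ne']
    linarith [neg_abs_le A]
  have ha4 : 4 < a ^ 2 := by nlinarith
  have hc : 0 < G a / gaussBarrier K a := div_pos (hpos a) (gaussBarrier_pos hK ha4)
  have hlow (x) (hx : a ≤ x) : G a / gaussBarrier K a ≤ x ^ 2 * G x := by
    have hx4 : 4 < x ^ 2 := by nlinarith
    calc G a / gaussBarrier K a ≤ G a / gaussBarrier K a * (x ^ 2 * gaussBarrier K x) :=
          le_mul_of_one_le_right hc.le (one_le_sq_mul_gaussBarrier hK hx4)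
      _ ≤ x ^ 2 * G x := by
          rw [mul_left_comm]
          exact mul_le_mul_of_nonneg_left
            (div_gaussBarrier_mul_le hG hG' hpos hL hK ha hW hx) (by positivity)
  obtain ⟨x, hx, hxa⟩ :=
    ((htop.eventually (gt_mem_nhds hc)).and (eventually_ge_atTop a)).exists
  linarith [hlow x hxa]

theorem antitoneOn_exp_mul_of_tendsto_sq_mul {G : ℝ → ℝ} (hG : Differentiable ℝ G)
    (hG' : Differentiable ℝ (deriv G)) (hpos : ∀ x, 0 < G x)
    (hL : ∀ x, 0 ≤ deriv (deriv G) x + x * deriv G x + 2 * G x)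
    (htop : Tendsto (fun x => x ^ 2 * G x) atTop (𝓝 0)) :
    AntitoneOn (fun x => exp (x ^ 2 / 4) * G x) (Ici 10) := by
  have hd (x : ℝ) : HasDerivAt (fun x => exp (x ^ 2 / 4) * G x)
      (exp (x ^ 2 / 4) * (deriv G x + x / 2 * G x)) x :=
    ((hasDerivAt_exp_sq_div 4 x).mul (hG x).hasDerivAt).congr_deriv (by ring)
  refine antitoneOn_of_hasDerivWithinAt_nonpos (convex_Ici 10)
    (fun x _ => (hd x).continuousAt.continuousWithinAt) (fun x _ => (hd x).hasDerivWithinAt)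
    fun x hx => mul_nonpos_of_nonneg_of_nonpos (exp_pos _).le
      (deriv_add_half_mul_nonpos hG hG' hpos hL htop (interior_subset hx))

noncomputable def weightedWronskian (G H : ℝ → ℝ) (x : ℝ) : ℝ :=
  exp (x ^ 2 / 2) * (deriv H x * G x - H x * deriv G x)

lemma hasDerivAt_div_eq_weightedWronskian {G H : ℝ → ℝ} (hG : Differentiable ℝ G)
    (hH : Differentiable ℝ H) (hGpos : ∀ x, 0 < G x) (x : ℝ) :
    HasDerivAt (fun x => H x / G x)
      (weightedWronskian G H x / (exp (x ^ 2 / 2) * G x ^ 2)) x := by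
  refine ((hH x).hasDerivAt.div (hG x).hasDerivAt (hGpos x).ne').congr_deriv ?_
  rw [weightedWronskian, mul_div_mul_left _ _ (exp_pos _).ne']

lemma hasDerivAt_weightedWronskian {G H : ℝ → ℝ} (hG : Differentiable ℝ G)
    (hG' : Differentiable ℝ (deriv G)) (hH : Differentiable ℝ H)
    (hH' : Differentiable ℝ (deriv H))
    (hGode : ∀ x, deriv (deriv G) x + x * deriv G x + 2 * G x = G x ^ 2)
    (hHode : ∀ x, deriv (deriv H) x + x * deriv H x + 2 * H x = H x ^ 2) (x : ℝ) :
    HasDerivAt (weightedWronskian G H) (exp (x ^ 2 / 2) * (G x * H x * (H x - G x))) x := by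
  refine (hasDerivAt_exp_mul_wronskian (hH x).hasDerivAt (hH' x).hasDerivAt (hG x).hasDerivAt
    (hG' x).hasDerivAt).congr_deriv ?_
  rw [hGode, hHode]
  ring

lemma strictAntiOn_weightedWronskian {G H : ℝ → ℝ} (hG : Differentiable ℝ G)
    (hG' : Differentiable ℝ (deriv G)) (hH : Differentiable ℝ H)
    (hH' : Differentiable ℝ (deriv H))
    (hGpos : ∀ x, 0 < G x) (hHpos : ∀ x, 0 < H x)
    (hGode : ∀ x, deriv (deriv G) x + x * deriv G x + 2 * G x = G x ^ 2)
    (hHode : ∀ x, deriv (deriv H) x + x * deriv H x + 2 * H x = H x ^ 2)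
    {s : Set ℝ} (hs : Convex ℝ s) (hlt : ∀ x ∈ s, H x < G x) :
    StrictAntiOn (weightedWronskian G H) s := by
  have hd := hasDerivAt_weightedWronskian hG hG' hH hH' hGode hHode
  refine strictAntiOn_of_hasDerivWithinAt_neg hs
    (fun x _ => (hd x).continuousAt.continuousWithinAt) (fun x _ => (hd x).hasDerivWithinAt)
    fun x hx => ?_
  have := hlt x (interior_subset hx)
  have := mul_pos (hGpos x) (hHpos x)
  exact mul_neg_of_pos_of_neg (exp_pos _) (mul_neg_of_pos_of_neg this (by linarith))

lemma strictAntiOn_div_of_lt {G H : ℝ → ℝ} (hG : Differentiable ℝ G)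
    (hG' : Differentiable ℝ (deriv G)) (hH : Differentiable ℝ H)
    (hH' : Differentiable ℝ (deriv H))
    (hGpos : ∀ x, 0 < G x) (hHpos : ∀ x, 0 < H x)
    (hGode : ∀ x, deriv (deriv G) x + x * deriv G x + 2 * G x = G x ^ 2)
    (hHode : ∀ x, deriv (deriv H) x + x * deriv H x + 2 * H x = H x ^ 2)
    {c : ℝ} (hc : c ≠ 0) (hGbot : Tendsto G atBot (𝓝 c)) (hHbot : Tendsto H atBot (𝓝 c))
    {x₀ : ℝ} (hx₀ : H x₀ < G x₀) : StrictAntiOn (fun x => H x / G x) (Ici x₀) := by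
  have hφ := hasDerivAt_div_eq_weightedWronskian hG hH hGpos
  have hw (x : ℝ) : 0 < exp (x ^ 2 / 2) * G x ^ 2 := by have := hGpos x; positivity
  have hlt_one (x : ℝ) : H x / G x < 1 ↔ H x < G x := div_lt_one (hGpos x)
  have hmin (z : ℝ) (hz : H z / G z < 1) : ¬ IsLocalMin (fun x => H x / G x) z := by
    have hnhds : {t | H t < G t} ∈ 𝓝 z :=
      hH.continuous.continuousAt.eventually_lt hG.continuous.continuousAt ((hlt_one z).1 hz)
    obtain ⟨l, hl, hsub⟩ := exists_Ioc_subset_of_mem_nhds hnhds ⟨z - 1, by linarith⟩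
    refine not_isLocalMin_of_hasDerivAt_div_of_strictAntiOn (a := (l + z) / 2) (by linarith)
      hφ hw (strictAntiOn_weightedWronskian hG hG' hH hH' hGpos hHpos hGode hHode
        (convex_Icc _ _) fun t ht => hsub ⟨by linarith [ht.1], ht.2⟩)
  have hbot : Tendsto (fun x => H x / G x) atBot (𝓝 1) := by
    rw [← div_self hc]
    exact hHbot.div hGbot hc
  have hdecr {a b : ℝ} (hab : a < b) (ha : H a / G a < 1) : H b / G b < H a / G a :=
    lt_of_tendsto_atBot_of_not_isLocalMin
      (hH.continuous.div hG.continuous fun x => (hGpos x).ne') hbot hmin hab ha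
  have hx₀' := (hlt_one x₀).2 hx₀
  intro a ha b _ hab
  rcases (mem_Ici.1 ha).eq_or_lt with rfl | hlt
  · exact hdecr hab hx₀'
  · exact hdecr hab ((hdecr hlt hx₀').trans hx₀')

theorem le_of_tendsto_sq_mul {G H : ℝ → ℝ} (hG : Differentiable ℝ G)
    (hG' : Differentiable ℝ (deriv G)) (hH : Differentiable ℝ H)
    (hH' : Differentiable ℝ (deriv H))
    (hGpos : ∀ x, 0 < G x) (hHpos : ∀ x, 0 < H x)
    (hGode : ∀ x, deriv (deriv G) x + x * deriv G x + 2 * G x = G x ^ 2)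
    (hHode : ∀ x, deriv (deriv H) x + x * deriv H x + 2 * H x = H x ^ 2)
    (hGtop : Tendsto (fun x => x ^ 2 * G x) atTop (𝓝 0))
    {c : ℝ} (hc : c ≠ 0) (hGbot : Tendsto G atBot (𝓝 c)) (hHbot : Tendsto H atBot (𝓝 c))
    (x₀ : ℝ) : G x₀ ≤ H x₀ := by
  by_contra! hx₀
  have hφ := hasDerivAt_div_eq_weightedWronskian hG hH hGpos
  have hw (x : ℝ) : 0 < exp (x ^ 2 / 2) * G x ^ 2 := by have := hGpos x; positivity
  have hanti :=
    strictAntiOn_div_of_lt hG hG' hH hH' hGpos hHpos hGode hHode hc hGbot hHbot hx₀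
  have hlt (x) (hx : x ∈ Ici x₀) : H x < G x := by
    rw [← div_lt_one (hGpos x)]
    exact (hanti.antitoneOn self_mem_Ici hx hx).trans_lt ((div_lt_one (hGpos x₀)).2 hx₀)
  have hP := strictAntiOn_weightedWronskian hG hG' hH hH' hGpos hHpos hGode hHode
    (convex_Ici x₀) hlt
  have hP₁ : weightedWronskian G H (x₀ + 1) < 0 := by
    by_contra! h
    have := strictMonoOn_of_hasDerivAt_div_of_strictAntiOn hφ hw (hP.mono Icc_subset_Ici_self) h
    exact (this ⟨le_rfl, by linarith⟩ ⟨by linarith, le_rfl⟩ (by linarith)).asymm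
      (hanti self_mem_Ici (mem_Ici.2 (by linarith)) (by linarith))
  set C := exp (10 ^ 2 / 4) * G 10
  have hgauss (x) (hx : x ∈ Ici (10 : ℝ)) : exp (x ^ 2 / 2) * G x ^ 2 ≤ C ^ 2 := by
    have h := antitoneOn_exp_mul_of_tendsto_sq_mul hG hG' hGpos
      (fun x => (sq_nonneg (G x)).trans_eq (hGode x).symm) hGtop self_mem_Ici hx hx
    have hsq : exp (x ^ 2 / 2) * G x ^ 2 = (exp (x ^ 2 / 4) * G x) ^ 2 := by
      rw [mul_pow, ← exp_nat_mul]
      ring_nf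
    rw [hsq]
    exact pow_le_pow_left₀ (by have := hGpos x; positivity) h 2
  set p := -weightedWronskian G H (x₀ + 1) with hp_def
  have hp : 0 < p := neg_pos.2 hP₁
  have hC : 0 < C := by have := hGpos 10; positivity
  obtain ⟨x, hx⟩ := exists_nonpos_of_hasDerivAt_le_neg (M := max (x₀ + 1) 10)
    (div_pos hp (pow_pos hC 2)) hφ fun x hx => by
      have hx₁ : x₀ + 1 ≤ x := le_of_max_le_left hx
      have hPx := hP.antitoneOn (mem_Ici.2 (by linarith)) (mem_Ici.2 (by linarith)) hx₁
      have hwp : p / C ^ 2 * (exp (x ^ 2 / 2) * G x ^ 2) ≤ p :=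
        calc _ ≤ p / C ^ 2 * C ^ 2 := by
              gcongr
              exact hgauss x (mem_Ici.2 (le_of_max_le_right hx))
          _ = p := div_mul_cancel₀ _ (by positivity)
      rw [div_le_iff₀ (hw x)]
      linarith
  exact (div_pos (hHpos x) (hGpos x)).not_ge hx

theorem stmt3 (G H : ℝ → ℝ) (hG : ContDiff ℝ 2 G) (hH : ContDiff ℝ 2 H)
    (hGpos : ∀ x, 0 < G x) (hHpos : ∀ x, 0 < H x)
    (hGODE : ∀ x : ℝ,
      (1/2) * deriv (deriv G) x + (x/2) * deriv G x + G x - (1/2) * (G x)^2 = 0)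
    (hHODE : ∀ x : ℝ,
      (1/2) * deriv (deriv H) x + (x/2) * deriv H x + H x - (1/2) * (H x)^2 = 0)
    (hGtop : Tendsto (fun x : ℝ => x^2 * G x) atTop (nhds 0))
    (hGbot : Tendsto G atBot (nhds 2))
    (hHtop : Tendsto (fun x : ℝ => x^2 * H x) atTop (nhds 0))
    (hHbot : Tendsto H atBot (nhds 2)) :
    G = H := by
  have hGode (x : ℝ) : deriv (deriv G) x + x * deriv G x + 2 * G x = G x ^ 2 := by
    linear_combination 2 * hGODE x
  have hHode (x : ℝ) : deriv (deriv H) x + x * deriv H x + 2 * H x = H x ^ 2 := by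
    linear_combination 2 * hHODE x
  have hG₁ := hG.differentiable two_ne_zero
  have hH₁ := hH.differentiable two_ne_zero
  funext x
  exact le_antisymm
    (le_of_tendsto_sq_mul hG₁ hG.differentiable_deriv_two hH₁ hH.differentiable_deriv_two
      hGpos hHpos hGode hHode hGtop two_ne_zero hGbot hHbot x)
    (le_of_tendsto_sq_mul hH₁ hH.differentiable_deriv_two hG₁ hG.differentiable_deriv_two
      hHpos hGpos hHode hGode hHtop two_ne_zero hHbot hGbot x)
end

section
/- Let G : ℝ → ℝ be twice continuously differentiable, satisfy the ODE (1/2)·G''(x) + (x/2)·G'(x) + G(x) − (1/2)·G(x)² = 0 for all x ∈ ℝ, and suppose 0 ≤ G(x) ≤ 2 and G'(x) ≤ 0 for all x, and that there is a constant c > 0 with G(y) ≤ c·y·e^{−y²/2} for all y > 2. Then there is a constant C > 0 such that |G'(x)| ≤ C·x²·e^{−x²/2} for all x > 2. -/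
/-!
With `H x = exp (x ^ 2 / 2) * G' x`, the ODE says `H' = exp (x ^ 2 / 2) * (G ^ 2 - 2 * G)`, and the
tail bound on `G` gives `H' x ≥ -2 c x` for `x > 2`. Hence `H x ≥ H 2 - c (x ^ 2 - 4)`, and since
`G' ≤ 0` this bounds `|G' x| = -H x * exp (-x ^ 2 / 2)` by a multiple of `x ^ 2 * exp (-x ^ 2 / 2)`.
-/

open Real Set

lemma hasDerivAt_exp_sq_half_mul {f : ℝ → ℝ} {f' x : ℝ} (hf : HasDerivAt f f' x) :
    HasDerivAt (fun t => exp (t ^ 2 / 2) * f t) (exp (x ^ 2 / 2) * (f' + x * f x)) x := by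
  have hq : HasDerivAt (fun t : ℝ => t ^ 2 / 2) x x := by
    simpa using (hasDerivAt_pow 2 x).div_const 2
  exact (hq.exp.fun_mul hf).congr_deriv (by ring)

lemma sub_le_sub_of_hasDerivAt_le {f g f' g' : ℝ → ℝ} {a x : ℝ}
    (hf : ∀ t, HasDerivAt f (f' t) t) (hg : ∀ t, HasDerivAt g (g' t) t)
    (hle : ∀ t, a < t → g' t ≤ f' t) (hx : a ≤ x) : g x - g a ≤ f x - f a := by
  have hmono : MonotoneOn (f - g) (Ici a) := by
    refine monotoneOn_of_hasDerivWithinAt_nonneg (convex_Ici a)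
      (fun t _ => ((hf t).sub (hg t)).continuousAt.continuousWithinAt)
      (fun t _ => ((hf t).sub (hg t)).hasDerivWithinAt) fun t ht => ?_
    rw [interior_Ici] at ht
    exact sub_nonneg.mpr (hle t ht)
  have := hmono self_mem_Ici hx hx
  simp only [Pi.sub_apply] at this
  linarith

lemma hasDerivAt_exp_sq_half_mul_deriv_of_ode {G : ℝ → ℝ} (hG : ContDiff ℝ 2 G)
    (hODE : ∀ x : ℝ,
      (1/2) * deriv (deriv G) x + (x/2) * deriv G x + G x - (1/2) * (G x)^2 = 0) (x : ℝ) :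
    HasDerivAt (fun t => exp (t ^ 2 / 2) * deriv G t) (exp (x ^ 2 / 2) * (G x ^ 2 - 2 * G x)) x := by
  have hG' : Differentiable ℝ (deriv G) :=
    (contDiff_succ_iff_deriv.mp (show ContDiff ℝ (1 + 1) G from hG)).2.2.differentiable one_ne_zero
  convert hasDerivAt_exp_sq_half_mul (hG' x).hasDerivAt using 2
  linarith [hODE x]

lemma exp_sq_half_mul_exp_neg_sq_half (t : ℝ) : exp (t ^ 2 / 2) * exp (-t ^ 2 / 2) = 1 := by
  rw [← exp_add, ← exp_zero]
  ring_nf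

lemma neg_two_mul_le_exp_sq_half_mul {g c t : ℝ} (hg : g ≤ c * t * exp (-t ^ 2 / 2)) :
    -(2 * c * t) ≤ exp (t ^ 2 / 2) * (g ^ 2 - 2 * g) := by
  calc -(2 * c * t) = exp (t ^ 2 / 2) * (-2 * (c * t * exp (-t ^ 2 / 2))) := by
        linear_combination (2 * c * t) * exp_sq_half_mul_exp_neg_sq_half t
    _ ≤ exp (t ^ 2 / 2) * (g ^ 2 - 2 * g) := by
        gcongr
        linarith [sq_nonneg g]

theorem stmt5_general (G : ℝ → ℝ) (hG : ContDiff ℝ 2 G)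
    (hODE : ∀ x : ℝ,
      (1/2) * deriv (deriv G) x + (x/2) * deriv G x + G x - (1/2) * (G x)^2 = 0)
    (hmono : ∀ x, deriv G x ≤ 0)
    (c : ℝ) (hc : 0 < c) (htail : ∀ y : ℝ, 2 < y → G y ≤ c * y * Real.exp (-y^2/2)) :
    ∃ C > (0:ℝ), ∀ x : ℝ, 2 < x → |deriv G x| ≤ C * x^2 * Real.exp (-x^2/2) := by
  set H : ℝ → ℝ := fun t => exp (t ^ 2 / 2) * deriv G t
  have hlow : ∀ x, 2 ≤ x → H 2 - c * (x ^ 2 - 4) ≤ H x := by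
    intro x hx
    have hcmp := sub_le_sub_of_hasDerivAt_le (hasDerivAt_exp_sq_half_mul_deriv_of_ode hG hODE)
      (fun t => (hasDerivAt_pow 2 t).const_mul (-c))
      (fun t ht => by
        have hderiv := neg_two_mul_le_exp_sq_half_mul (htail t ht)
        norm_num at hderiv ⊢
        linarith) hx
    simp only [H]
    linarith
  refine ⟨c + |H 2| / 4, by positivity, fun x hx => ?_⟩
  have hGx : deriv G x = H x * exp (-x ^ 2 / 2) := by
    simp only [H]
    rw [mul_right_comm, exp_sq_half_mul_exp_neg_sq_half, one_mul]
  have hHx : -H x ≤ (c + |H 2| / 4) * x ^ 2 := by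
    have hx2 : 4 < x ^ 2 := by nlinarith
    nlinarith [hlow x hx.le, neg_le_abs (H 2), mul_nonneg (abs_nonneg (H 2)) (sub_nonneg.mpr hx2.le)]
  rw [abs_of_nonpos (hmono x), hGx, ← neg_mul]
  exact mul_le_mul_of_nonneg_right hHx (exp_pos _).le

theorem stmt5 (G : ℝ → ℝ) (hG : ContDiff ℝ 2 G)
    (hODE : ∀ x : ℝ,
      (1/2) * deriv (deriv G) x + (x/2) * deriv G x + G x - (1/2) * (G x)^2 = 0)
    (hbd : ∀ x, 0 ≤ G x ∧ G x ≤ 2) (hmono : ∀ x, deriv G x ≤ 0)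
    (c : ℝ) (hc : 0 < c) (htail : ∀ y : ℝ, 2 < y → G y ≤ c * y * Real.exp (-y^2/2)) :
    ∃ C > (0:ℝ), ∀ x : ℝ, 2 < x → |deriv G x| ≤ C * x^2 * Real.exp (-x^2/2) :=
  stmt5_general G hG hODE hmono c hc htail
end

section
/- Let G : ℝ → ℝ be twice continuously differentiable, satisfy the ODE (1/2)·G''(x) + (x/2)·G'(x) + G(x) − (1/2)·G(x)² = 0 for all x ∈ ℝ, and suppose 0 ≤ G(x) ≤ 2 and G'(x) ≤ 0 for all x. Then |G'(x)| ≤ |G'(0)|·e^{−x²/2} for all x ≤ 0. -/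
open Real

/-! For `H x = G' x * exp (x² / 2)` the ODE gives `H' = (G² - 2G) e^{x²/2} ≤ 0`, since `0 ≤ G ≤ 2`.
So `H` is antitone, and for `x ≤ 0` this gives `G' 0 ≤ G' x * e^{x²/2}`; as `G' ≤ 0`, this is the bound. -/

theorem hasDerivAt_mul_exp_sq_half {f : ℝ → ℝ} {f' x : ℝ} (hf : HasDerivAt f f' x) :
    HasDerivAt (fun y => f y * exp (y ^ 2 / 2)) ((f' + x * f x) * exp (x ^ 2 / 2)) x := by
  have hsq : HasDerivAt (fun y : ℝ => y ^ 2 / 2) x x := by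
    simpa using (hasDerivAt_pow 2 x).div_const 2
  exact (hf.fun_mul hsq.exp).congr_deriv (by ring)

theorem antitone_mul_exp_sq_half {f : ℝ → ℝ} (hf : Differentiable ℝ f)
    (h : ∀ x, deriv f x + x * f x ≤ 0) : Antitone fun x => f x * exp (x ^ 2 / 2) := by
  have hderiv x := hasDerivAt_mul_exp_sq_half (hf x).hasDerivAt
  refine antitone_of_deriv_nonpos (fun x => (hderiv x).differentiableAt) fun x => ?_
  rw [(hderiv x).deriv]
  exact mul_nonpos_of_nonpos_of_nonneg (h x) (exp_pos _).le

theorem stmt6 (G : ℝ → ℝ) (hG : ContDiff ℝ 2 G)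
    (hODE : ∀ x : ℝ,
      (1/2) * deriv (deriv G) x + (x/2) * deriv G x + G x - (1/2) * (G x)^2 = 0)
    (hbd : ∀ x, 0 ≤ G x ∧ G x ≤ 2) (hmono : ∀ x, deriv G x ≤ 0) :
    ∀ x : ℝ, x ≤ 0 → |deriv G x| ≤ |deriv G 0| * Real.exp (-x^2/2) := by
  have hdG : Differentiable ℝ (deriv G) :=
    (hG.deriv' (n := 1)).differentiable one_ne_zero
  have hanti := antitone_mul_exp_sq_half hdG fun x => by
    have hG_range : 0 ≤ G x * (2 - G x) := mul_nonneg (hbd x).1 (by linarith [(hbd x).2])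
    linarith [hODE x]
  intro x hx
  have hH : deriv G 0 ≤ deriv G x * exp (x ^ 2 / 2) := by simpa using hanti hx
  rw [abs_of_nonpos (hmono x), abs_of_nonpos (hmono 0), neg_div, exp_neg, ← div_eq_mul_inv,
    le_div_iff₀ (exp_pos _)]
  linarith
end

section
/- Let G : ℝ → ℝ be three times continuously differentiable and satisfy the ODE (1/2)·G''(x) + (x/2)·G'(x) + G(x) − (1/2)·G(x)² = 0 for all x ∈ ℝ. Define ψ : ℝ → ℝ by ψ(x) = e^{x²/2}·G'(x). Then ψ is twice continuously differentiable and satisfies the eigenfunction equation (1/2)·ψ''(x) − (x/2)·ψ'(x) − G(x)·ψ(x) = −ψ(x) for all x ∈ ℝ; that is, ψ is an eigenfunction of the killed Ornstein–Uhlenbeck operator A^G f = (1/2)f'' − (x/2)f' − G·f with eigenvalue −1. -/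
/-!
Differentiating the ODE shows that `g = G'` solves `½ g'' + (x/2) g' + (3/2) g - G g = 0`.
Conjugating by the Gaussian weight turns the drift `+ (x/2) d/dx` into `- (x/2) d/dx`:
for `ψ = e^{x²/2} g` one has `½ ψ'' - (x/2) ψ' = e^{x²/2} (½ g'' + (x/2) g' + ½ g)`,
and the two identities combine to `½ ψ'' - (x/2) ψ' - G ψ = -ψ`.
-/

open Real

lemma hasDerivAt_exp_sq_div_two (x : ℝ) :
    HasDerivAt (fun y : ℝ => exp (y ^ 2 / 2)) (x * exp (x ^ 2 / 2)) x := by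
  simpa [mul_comm] using ((hasDerivAt_pow 2 x).div_const 2).exp

lemma deriv_exp_sq_div_two_mul {g : ℝ → ℝ} (hg : Differentiable ℝ g) :
    deriv (fun y => exp (y ^ 2 / 2) * g y) = fun y => exp (y ^ 2 / 2) * (y * g y + deriv g y) :=
  funext fun y => ((hasDerivAt_exp_sq_div_two y).mul (hg y).hasDerivAt).deriv.trans (by ring)

lemma half_deriv_deriv_sub_deriv_exp_sq_div_two_mul {g : ℝ → ℝ} {x : ℝ}
    (hg : Differentiable ℝ g) (hg' : DifferentiableAt ℝ (deriv g) x) :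
    (1/2) * deriv (deriv fun y => exp (y ^ 2 / 2) * g y) x
        - (x/2) * deriv (fun y => exp (y ^ 2 / 2) * g y) x
      = exp (x ^ 2 / 2) * ((1/2) * deriv (deriv g) x + (x/2) * deriv g x + (1/2) * g x) := by
  have h : HasDerivAt (fun y => exp (y ^ 2 / 2) * (y * g y + deriv g y)) _ x :=
    (hasDerivAt_exp_sq_div_two x).mul
      (((hasDerivAt_id' x).mul (hg x).hasDerivAt).add hg'.hasDerivAt)
  rw [deriv_exp_sq_div_two_mul hg, h.deriv]
  ring

lemma deriv_ode_eq_zero {G : ℝ → ℝ}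
    (hODE : ∀ x : ℝ,
      (1/2) * deriv (deriv G) x + (x/2) * deriv G x + G x - (1/2) * (G x)^2 = 0)
    {x : ℝ} (h₀ : DifferentiableAt ℝ G x) (h₁ : DifferentiableAt ℝ (deriv G) x)
    (h₂ : DifferentiableAt ℝ (deriv (deriv G)) x) :
    (1/2) * deriv (deriv (deriv G)) x + (x/2) * deriv (deriv G) x + (3/2) * deriv G x
      - G x * deriv G x = 0 := by
  have h : HasDerivAt
      (fun y => (1/2) * deriv (deriv G) y + (y/2) * deriv G y + G y - (1/2) * (G y)^2) _ x :=
    (((h₂.hasDerivAt.const_mul (1/2)).add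
      (((hasDerivAt_id' x).div_const 2).mul h₁.hasDerivAt)).add h₀.hasDerivAt).sub
      ((h₀.hasDerivAt.pow 2).const_mul (1/2))
  rw [funext hODE, Nat.cast_ofNat, Nat.add_one_sub_one, pow_one] at h
  linear_combination h.unique (hasDerivAt_const x 0)

theorem stmt8 (G : ℝ → ℝ) (hG : ContDiff ℝ 3 G)
    (hODE : ∀ x : ℝ,
      (1/2) * deriv (deriv G) x + (x/2) * deriv G x + G x - (1/2) * (G x)^2 = 0) :
    ContDiff ℝ 2 (fun x => Real.exp (x^2/2) * deriv G x) ∧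
    ∀ x : ℝ,
      (1/2) * deriv (deriv (fun y => Real.exp (y^2/2) * deriv G y)) x
        - (x/2) * deriv (fun y => Real.exp (y^2/2) * deriv G y) x
        - G x * (Real.exp (x^2/2) * deriv G x)
      = -(Real.exp (x^2/2) * deriv G x) := by
  have hG' : ContDiff ℝ 2 (deriv G) := hG.deriv'
  have hG'' : ContDiff ℝ 1 (deriv (deriv G)) := hG'.deriv'
  refine ⟨(contDiff_exp.comp ((contDiff_id.pow 2).div_const 2)).mul hG', fun x => ?_⟩
  have hψ := half_deriv_deriv_sub_deriv_exp_sq_div_two_mul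
    (hG'.differentiable (by norm_num)) (hG''.differentiable one_ne_zero x)
  have hg := deriv_ode_eq_zero hODE (hG.differentiable (by norm_num) x)
    (hG'.differentiable (by norm_num) x) (hG''.differentiable one_ne_zero x)
  linear_combination hψ + exp (x ^ 2 / 2) * hg
end

section
/- Let H : ℝ → (0,∞) be continuous with lim_{x→−∞} H(x) = 2. Then for every open set U ⊆ ℝ with U ∩ (−∞,0] ≠ ∅, one has lim_{t↓0} ∫_U t⁻¹·H(t^{-1/2}·x) dx = +∞. -/
/-!
Choose an interval `(b, c) ⊆ U` with `c < 0`. As `t ↓ 0`, the points `t^{-1/2} x` with `x ∈ (b, c)`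
all escape to `-∞`, where `H ≥ 1`; hence the integral over `U` is at least `t⁻¹ (c - b) → ∞`.
-/

open Filter MeasureTheory Set Topology

theorem IsOpen.exists_Ioo_subset_of_inter_Iic_nonempty {U : Set ℝ} (hU : IsOpen U) {a : ℝ}
    (hUa : (U ∩ Iic a).Nonempty) : ∃ b c, b < c ∧ c < a ∧ Ioo b c ⊆ U := by
  obtain ⟨x, hxU, hxa⟩ := hUa
  obtain ⟨l, hlx, hsub⟩ := exists_Ioc_subset_of_mem_nhds (hU.mem_nhds hxU) ⟨x - 1, by linarith⟩
  refine ⟨l, (l + x) / 2, by linarith, by linarith [mem_Iic.1 hxa], ?_⟩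
  exact (Ioo_subset_Ioc_self.trans (Ioc_subset_Ioc_right (by linarith))).trans hsub

theorem tendsto_inv_sqrt_mul_nhdsGT_zero_atBot {c : ℝ} (hc : c < 0) :
    Tendsto (fun t : ℝ => (Real.sqrt t)⁻¹ * c) (𝓝[>] 0) atBot := by
  have hsqrt : Tendsto Real.sqrt (𝓝[>] 0) (𝓝[>] 0) :=
    tendsto_nhdsWithin_of_tendsto_nhds_of_eventually_within _
      (Real.continuous_sqrt.tendsto' 0 0 Real.sqrt_zero |>.mono_left nhdsWithin_le_nhds)
      (eventually_nhdsWithin_of_forall fun _ ht => Real.sqrt_pos.2 ht)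
  exact (tendsto_inv_nhdsGT_zero.comp hsqrt).atTop_mul_const_of_neg hc

theorem eventually_forall_le_apply_inv_sqrt_mul {H : ℝ → ℝ} {m : ℝ}
    (hH : ∀ᶠ y in atBot, m ≤ H y) {c : ℝ} (hc : c < 0) :
    ∀ᶠ t in 𝓝[>] 0, ∀ x ≤ c, m ≤ H ((Real.sqrt t)⁻¹ * x) := by
  obtain ⟨M, hM⟩ := eventually_atBot.1 hH
  filter_upwards [(tendsto_inv_sqrt_mul_nhdsGT_zero_atBot hc).eventually_le_atBot M]
    with t ht x hx
  exact hM _ ((mul_le_mul_of_nonneg_left hx (by positivity)).trans ht)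

theorem tendsto_ofReal_inv_mul_nhdsGT_zero {K : ℝ} (hK : 0 < K) :
    Tendsto (fun t : ℝ => ENNReal.ofReal (t⁻¹ * K)) (𝓝[>] 0) (𝓝 ⊤) :=
  ENNReal.tendsto_ofReal_atTop.comp (tendsto_inv_nhdsGT_zero.atTop_mul_const hK)

theorem stmt12_general (H : ℝ → ℝ) (hlim : Tendsto H atBot (nhds 2)) :
    ∀ U : Set ℝ, IsOpen U → (U ∩ Set.Iic 0).Nonempty →
      Tendsto (fun t : ℝ => ∫⁻ x in U, ENNReal.ofReal (t⁻¹ * H ((Real.sqrt t)⁻¹ * x)))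
        (nhdsWithin 0 (Set.Ioi 0)) (nhds ⊤) := by
  rintro U hU hUa
  obtain ⟨b, c, hbc, hc, hsub⟩ := hU.exists_Ioo_subset_of_inter_Iic_nonempty hUa
  have hH1 : ∀ᶠ y in atBot, 1 ≤ H y := hlim.eventually (eventually_ge_nhds one_lt_two)
  refine tendsto_nhds_top_mono (tendsto_ofReal_inv_mul_nhdsGT_zero (sub_pos.2 hbc)) ?_
  filter_upwards [eventually_forall_le_apply_inv_sqrt_mul hH1 hc, self_mem_nhdsWithin]
    with t hHt ht
  have ht_inv : 0 ≤ t⁻¹ := inv_nonneg.2 (le_of_lt ht)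
  calc ENNReal.ofReal (t⁻¹ * (c - b))
      = ∫⁻ _ in Ioo b c, ENNReal.ofReal t⁻¹ := by
        rw [setLIntegral_const, Real.volume_Ioo, ENNReal.ofReal_mul ht_inv]
    _ ≤ ∫⁻ x in Ioo b c, ENNReal.ofReal (t⁻¹ * H ((Real.sqrt t)⁻¹ * x)) :=
        setLIntegral_mono' measurableSet_Ioo fun x hx =>
          ENNReal.ofReal_le_ofReal (le_mul_of_one_le_right ht_inv (hHt x hx.2.le))
    _ ≤ ∫⁻ x in U, ENNReal.ofReal (t⁻¹ * H ((Real.sqrt t)⁻¹ * x)) := lintegral_mono_set hsub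

theorem stmt12 (H : ℝ → ℝ) (hH : Continuous H) (hH0 : ∀ y, 0 < H y)
    (hlim : Tendsto H atBot (nhds 2)) :
    ∀ U : Set ℝ, IsOpen U → (U ∩ Set.Iic 0).Nonempty →
      Tendsto (fun t : ℝ => ∫⁻ x in U, ENNReal.ofReal (t⁻¹ * H ((Real.sqrt t)⁻¹ * x)))
        (nhdsWithin 0 (Set.Ioi 0)) (nhds ⊤) :=
  stmt12_general H hlim
end

section
/- Let (Ω, F, P) be a probability space, (F_n)_{n∈ℕ} a filtration of sub-σ-algebras of F, and F_∞ the smallest σ-algebra containing F_n for all n. Let (Y_n)_{n∈ℕ} be random variables and W an integrable random variable with |Y_n| ≤ W for all n. Then, almost surely, limsup_n E[Y_n | F_n] ≤ E[ limsup_n Y_n | F_∞ ]. -/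
/-!
Let `Z m = sup_{k ≥ m} Y k`. For `n ≥ m` we have `E[Y n | F n] ≤ E[Z m | F n]`, and by Lévy's upward
theorem the right-hand side converges a.s. to `E[Z m | F_∞]`; hence
`limsup E[Y n | F n] ≤ E[Z m | F_∞]` a.s. for every `m`. Since `Z m` decreases to `limsup Y` and is
dominated by `W`, conditional dominated convergence gives `E[Z m | F_∞] → E[limsup Y | F_∞]` in
`L¹`, so a.s. along a subsequence, and the bound passes to the limit.
-/

open Filter MeasureTheory Topology Set

theorem le_ciSup_add_of_le {α : Type*} [ConditionallyCompleteLattice α] {u : ℕ → α}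
    (hu : BddAbove (range u)) {m n : ℕ} (hmn : m ≤ n) : u n ≤ ⨆ k, u (k + m) := by
  have htail : BddAbove (range fun k => u (k + m)) := hu.mono (range_comp_subset_range (· + m) u)
  simpa [Nat.sub_add_cancel hmn] using le_ciSup htail (n - m)

section TailSupremum

variable {α : Type*} [ConditionallyCompleteLinearOrder α] {u : ℕ → α}

theorem antitone_iSup_add (hu : BddAbove (range u)) : Antitone fun m => ⨆ k, u (k + m) :=
  fun a b hab => ciSup_le fun k => le_ciSup_add_of_le hu (by omega)

theorem bddBelow_range_iSup_add (hu : BddAbove (range u)) (hu' : BddBelow (range u)) :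
    BddBelow (range fun m => ⨆ k, u (k + m)) := by
  obtain ⟨c, hc⟩ := hu'
  exact ⟨c, by rintro _ ⟨m, rfl⟩; exact (hc ⟨m, rfl⟩).trans (le_ciSup_add_of_le hu le_rfl)⟩

theorem Filter.limsup_eq_ciInf_iSup_add (hu : BddAbove (range u)) (hu' : BddBelow (range u)) :
    limsup u atTop = ⨅ m, ⨆ k, u (k + m) := by
  refine le_antisymm (le_ciInf fun m => ?_)
    (le_limsup_of_le hu.isBoundedUnder_of_range fun b hb => ?_)
  · exact limsup_le_of_le hu'.isBoundedUnder_of_range.isCoboundedUnder_le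
      (eventually_atTop.2 ⟨m, fun _ => le_ciSup_add_of_le hu⟩)
  · obtain ⟨m, hm⟩ := eventually_atTop.1 hb
    exact ciInf_le_of_le (bddBelow_range_iSup_add hu hu') m (ciSup_le fun k => hm _ (by omega))

theorem Filter.tendsto_iSup_add_limsup [TopologicalSpace α] [OrderTopology α]
    (hu : BddAbove (range u)) (hu' : BddBelow (range u)) :
    Tendsto (fun m => ⨆ k, u (k + m)) atTop (𝓝 (limsup u atTop)) :=
  limsup_eq_ciInf_iSup_add hu hu' ▸
    tendsto_atTop_ciInf (antitone_iSup_add hu) (bddBelow_range_iSup_add hu hu')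

end TailSupremum

theorem abs_ciSup_le {ι : Type*} [Nonempty ι] {f : ι → ℝ} {c : ℝ} (h : ∀ i, |f i| ≤ c) :
    |⨆ i, f i| ≤ c := by
  have hbdd : BddAbove (range f) := ⟨c, by rintro _ ⟨i, rfl⟩; exact (abs_le.1 (h i)).2⟩
  obtain ⟨i⟩ := ‹Nonempty ι›
  exact abs_le.2 ⟨(abs_le.1 (h i)).1.trans (le_ciSup hbdd i), ciSup_le fun i => (abs_le.1 (h i)).2⟩

namespace MeasureTheory

variable {Ω : Type*} {m m0 : MeasurableSpace Ω} {μ : Measure Ω}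

theorem TendstoInMeasure.ae_le_of_forall_ae_le {E : Type*} [PseudoEMetricSpace E] [Preorder E]
    [ClosedIciTopology E] {ι : Type*} {l : Filter ι} [l.NeBot] [l.IsCountablyGenerated]
    {f : ι → Ω → E} {g h : Ω → E} (hfg : TendstoInMeasure μ f l g) (hle : ∀ i, h ≤ᵐ[μ] f i) :
    h ≤ᵐ[μ] g := by
  obtain ⟨ns, -, hns⟩ := hfg.exists_seq_tendsto_ae'
  filter_upwards [ae_all_iff.2 fun k => hle (ns k), hns] with ω hle_ω hns_ω
  exact ge_of_tendsto' hns_ω hle_ω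

theorem tendstoInMeasure_condExp_of_dominated_convergence (hm : m ≤ m0) [SigmaFinite (μ.trim hm)]
    {f : ℕ → Ω → ℝ} {g bound : Ω → ℝ} (hf : ∀ n, AEStronglyMeasurable (f n) μ)
    (hbound : Integrable bound μ) (hf_bound : ∀ n, ∀ᵐ ω ∂μ, ‖f n ω‖ ≤ bound ω)
    (hfg : ∀ᵐ ω ∂μ, Tendsto (fun n => f n ω) atTop (𝓝 (g ω))) :
    TendstoInMeasure μ (fun n => μ[f n|m]) atTop (μ[g|m]) :=
  (tendstoInMeasure_of_tendsto_Lp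
      (tendsto_condExpL1_of_dominated_convergence hm bound hf hbound hf_bound hfg)).congr
    (fun n => (condExp_ae_eq_condExpL1 hm (f n)).symm) (condExp_ae_eq_condExpL1 hm g).symm

theorem ae_limsup_condExp_le_condExp_iSup [IsFiniteMeasure μ] {F : Filtration ℕ m0}
    {Y : ℕ → Ω → ℝ} {X W : Ω → ℝ} (hY : ∀ n, Integrable (Y n) μ) (hX : Integrable X μ)
    (hW : Integrable W μ) (hWY : ∀ n, W ≤ᵐ[μ] Y n) (hYX : ∀ᶠ n in atTop, Y n ≤ᵐ[μ] X) :
    ∀ᵐ ω ∂μ, limsup (fun n => μ[Y n|F n] ω) atTop ≤ μ[X|⨆ n, F n] ω := by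
  obtain ⟨N, hN⟩ := eventually_atTop.1 hYX
  have hlow : ∀ᵐ ω ∂μ, ∀ n, μ[W|F n] ω ≤ μ[Y n|F n] ω :=
    ae_all_iff.2 fun n => condExp_mono hW (hY n) (hWY n)
  have hup : ∀ᵐ ω ∂μ, ∀ n, N ≤ n → μ[Y n|F n] ω ≤ μ[X|F n] ω :=
    ae_all_iff.2 fun n => by
      by_cases hn : N ≤ n
      · filter_upwards [condExp_mono (hY n) hX (hN n hn)] with ω hω _ using hω
      · exact Eventually.of_forall fun _ h => absurd h hn
  filter_upwards [hlow, hup, tendsto_ae_condExp (ℱ := F) W, tendsto_ae_condExp (ℱ := F) X]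
    with ω hlow hup hW_lim hX_lim
  have hcobdd : IsCoboundedUnder (· ≤ ·) atTop fun n => μ[Y n|F n] ω :=
    (hW_lim.isBoundedUnder_ge.mono_ge (Eventually.of_forall hlow)).isCoboundedUnder_le
  calc limsup (fun n => μ[Y n|F n] ω) atTop
      ≤ limsup (fun n => μ[X|F n] ω) atTop :=
        limsup_le_limsup (eventually_atTop.2 ⟨N, hup⟩) hcobdd hX_lim.isBoundedUnder_le
    _ = μ[X|⨆ n, F n] ω := hX_lim.limsup_eq

end MeasureTheory

theorem stmt15 {Ω : Type*} {m0 : MeasurableSpace Ω} (P : Measure Ω)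
    [IsProbabilityMeasure P] (F : Filtration ℕ m0)
    (Y : ℕ → Ω → ℝ) (W : Ω → ℝ)
    (hY : ∀ n, Measurable (Y n))
    (hW : Integrable W P)
    (hbd : ∀ n ω, |Y n ω| ≤ W ω) :
    ∀ᵐ ω ∂P,
      limsup (fun n => (P[Y n | F n]) ω) atTop ≤
        (P[(fun ω' => limsup (fun n => Y n ω') atTop) | ⨆ n, (F n : MeasurableSpace Ω)]) ω := by
  set Z : ℕ → Ω → ℝ := fun m ω => ⨆ k, Y (k + m) ω
  have hY_bddAbove : ∀ ω, BddAbove (range fun n => Y n ω) := fun ω =>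
    ⟨W ω, by rintro _ ⟨n, rfl⟩; exact (abs_le.1 (hbd n ω)).2⟩
  have hY_bddBelow : ∀ ω, BddBelow (range fun n => Y n ω) := fun ω =>
    ⟨-W ω, by rintro _ ⟨n, rfl⟩; exact (abs_le.1 (hbd n ω)).1⟩
  have hY_int : ∀ n, Integrable (Y n) P := fun n =>
    hW.mono' (hY n).aestronglyMeasurable (Eventually.of_forall (hbd n))
  have hZ_meas : ∀ m, Measurable (Z m) := fun m => Measurable.iSup fun k => hY _
  have hZ_bd : ∀ m ω, |Z m ω| ≤ W ω := fun m ω => abs_ciSup_le fun k => hbd _ ω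
  have hZ_int : ∀ m, Integrable (Z m) P := fun m =>
    hW.mono' (hZ_meas m).aestronglyMeasurable (Eventually.of_forall (hZ_bd m))
  have hZ_lim : ∀ ω, Tendsto (fun m => Z m ω) atTop (𝓝 (limsup (fun n => Y n ω) atTop)) :=
    fun ω => tendsto_iSup_add_limsup (hY_bddAbove ω) (hY_bddBelow ω)
  have hle_condExp_Z : ∀ m, ∀ᵐ ω ∂P,
      limsup (fun n => P[Y n|F n] ω) atTop ≤ P[Z m|⨆ n, F n] ω := fun m =>
    ae_limsup_condExp_le_condExp_iSup hY_int (hZ_int m) hW.neg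
      (fun n => Eventually.of_forall fun ω => neg_le_of_abs_le (hbd n ω))
      (eventually_atTop.2 ⟨m, fun _ hmn =>
        Eventually.of_forall fun ω => le_ciSup_add_of_le (hY_bddAbove ω) hmn⟩)
  exact (tendstoInMeasure_condExp_of_dominated_convergence (iSup_le F.le)
    (fun m => (hZ_meas m).aestronglyMeasurable) hW (fun m => Eventually.of_forall (hZ_bd m))
    (Eventually.of_forall hZ_lim)).ae_le_of_forall_ae_le hle_condExp_Z
end
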